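/- For every integer k ≥ 3, the binary form p_{2k}(x,y) = C(2k,k) x^k y^k of degree 2k satisfies L_ℝ(p_{2k}) = 2k. -/

import Mathlib

/-!
A representation `x^k y^k = ∑ λ_j (a_j x + b_j y)^(2k)` amounts to the moment equations
`∑_j λ_j a_j^i b_j^(2k-i) = δ_{ik}` for `i ≤ 2k`.

Lower bound. Given `r < 2k` points, let `p` be the monic polynomial whose roots are the finite
slopes `a_j / b_j`, homogenized to degree `d ≤ r` (one more than `deg p` when some `b_j = 0`), so
that it vanishes at every `(a_j, b_j)`. Pairing it with the moment sequence (apolarity) forces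
`p_{d-k} = p_{d-k+1} = 0`. A squarefree real-rooted polynomial has no two consecutive vanishing
coefficients below its degree (Rolle: its `(d-k)`-th derivative would be squarefree with a double
root at `0`), so `deg p < d - k`, which is impossible since `d ≤ deg p + 1` and `k ≥ 1`.

Upper bound. For distinct nodes `t_1, …, t_n` and `g = ∏ (X - t_j)`, the equations
`∑_j c_j t_j^e = u_e` (`e ≤ n`) are solvable as soon as `∑_e g_e u_e = 0`. For nodes symmetric
about `0`, `g` has the parity of `n`, so `g_k = 0` when `k + n` is odd: take `n = 2k` nodes for
odd `k`, and `n = 2k - 1` nodes together with the point at infinity for even `k`.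
-/

open MvPolynomial

/-- The real rank (length) of a real binary form `f` of degree `d`. -/
noncomputable def LrankR (d : ℕ) (f : MvPolynomial (Fin 2) ℝ) : ℕ∞ :=
  sInf { n : ℕ∞ | ∃ r : ℕ, n = (r : ℕ∞) ∧ ∃ lam al be : Fin r → ℝ,
    f = ∑ j, MvPolynomial.C (lam j) *
      (MvPolynomial.C (al j) * X 0 + MvPolynomial.C (be j) * X 1) ^ d }

open Finset

section BinaryForms

variable {R : Type*} [CommRing R]

lemma sum_C_mul_linear_pow {r : ℕ} (d : ℕ) (lam al be : Fin r → R) :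
    ∑ j, C (lam j) * (C (al j) * X 0 + C (be j) * X 1) ^ d =
      ∑ i ∈ range (d + 1), C ((d.choose i : R) * ∑ j, lam j * al j ^ i * be j ^ (d - i)) *
        (X 0 ^ i * X 1 ^ (d - i) : MvPolynomial (Fin 2) R) := by
  simp only [add_pow, mul_sum, map_mul, map_sum, sum_mul]
  rw [sum_comm]
  refine sum_congr rfl fun i _ => sum_congr rfl fun j _ => ?_
  simp only [mul_pow, map_pow, map_natCast]
  ring

lemma coeff_sum_C_mul_X_pow_mul_X_pow (c : ℕ → R) {d i : ℕ} (hi : i ≤ d) :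
    coeff (Finsupp.single 0 i + Finsupp.single 1 (d - i))
      (∑ l ∈ range (d + 1), C (c l) * (X 0 ^ l * X 1 ^ (d - l)) : MvPolynomial (Fin 2) R) =
      c i := by
  simp_rw [coeff_sum, X_pow_eq_monomial, monomial_mul, one_mul, coeff_C_mul, coeff_monomial]
  rw [sum_eq_single i]
  · simp
  · intro l _ hli
    rw [if_neg, mul_zero]
    intro h
    exact hli (by simpa using congrArg (· 0) h)
  · intro h
    exact absurd (mem_range.2 (Nat.lt_succ_of_le hi)) h

lemma sum_C_mul_X_pow_mul_X_pow_inj {c c' : ℕ → R} {d : ℕ} :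
    ∑ l ∈ range (d + 1), C (c l) * (X 0 ^ l * X 1 ^ (d - l) : MvPolynomial (Fin 2) R) =
      ∑ l ∈ range (d + 1), C (c' l) * (X 0 ^ l * X 1 ^ (d - l)) ↔ ∀ i ≤ d, c i = c' i := by
  refine ⟨fun h i hi => ?_, fun h => sum_congr rfl fun l hl => ?_⟩
  · have := congrArg (coeff (Finsupp.single 0 i + Finsupp.single 1 (d - i))) h
    rwa [coeff_sum_C_mul_X_pow_mul_X_pow _ hi, coeff_sum_C_mul_X_pow_mul_X_pow _ hi] at this
  · rw [h l (Nat.lt_succ_iff.1 (mem_range.1 hl))]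

end BinaryForms

lemma C_choose_mul_X_pow_mul_X_pow_eq_iff {k r : ℕ} (lam al be : Fin r → ℝ) :
    (C (((2 * k).choose k : ℕ) : ℝ) * X 0 ^ k * X 1 ^ k : MvPolynomial (Fin 2) ℝ) =
        ∑ j, C (lam j) * (C (al j) * X 0 + C (be j) * X 1) ^ (2 * k) ↔
      ∀ i ≤ 2 * k, ∑ j, lam j * al j ^ i * be j ^ (2 * k - i) = if i = k then 1 else 0 := by
  have htarget : (C (((2 * k).choose k : ℕ) : ℝ) * X 0 ^ k * X 1 ^ k : MvPolynomial (Fin 2) ℝ) =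
      ∑ i ∈ range (2 * k + 1), C (((2 * k).choose i : ℝ) * if i = k then 1 else 0) *
        (X 0 ^ i * X 1 ^ (2 * k - i)) := by
    rw [sum_eq_single k (fun i _ hik => by simp [hik]) (by simp; omega)]
    simp [two_mul, mul_assoc]
  rw [htarget, sum_C_mul_linear_pow, sum_C_mul_X_pow_mul_X_pow_inj]
  refine forall₂_congr fun i hi => ?_
  rw [mul_right_inj' (by exact_mod_cast (Nat.choose_pos hi).ne'), eq_comm]

namespace Polynomial

section CommRing

variable {R : Type*} [CommRing R]

lemma eval_homogenize_eq_sum (p : R[X]) (d : ℕ) (x : Fin 2 → R) :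
    MvPolynomial.eval x (p.homogenize d) =
      ∑ i ∈ range (d + 1), p.coeff i * x 0 ^ i * x 1 ^ (d - i) := by
  simp only [homogenize, map_sum, Finset.Nat.sum_antidiagonal_eq_sum_range_succ_mk,
    MvPolynomial.eval_monomial]
  refine sum_congr rfl fun i _ => ?_
  rw [Finsupp.update_eq_add_single (by simp), Finsupp.prod_add_index' (by simp) (by simp [pow_add]),
    Finsupp.prod_single_index (by simp), Finsupp.prod_single_index (by simp), mul_assoc]

lemma eval_homogenize_eq_zero_of_natDegree_lt {p : R[X]} {d : ℕ} (hd : p.natDegree < d)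
    {x : Fin 2 → R} (hx : x 1 = 0) : MvPolynomial.eval x (p.homogenize d) = 0 := by
  rw [eval_homogenize_eq_sum, sum_range_succ, coeff_eq_zero_of_natDegree_lt hd, hx, zero_mul,
    zero_mul, add_zero]
  exact sum_eq_zero fun i hi => by rw [zero_pow (Nat.sub_ne_zero_of_lt (mem_range.1 hi)), mul_zero]

lemma coeff_comp_neg_X (p : R[X]) (i : ℕ) : (p.comp (-X)).coeff i = (-1) ^ i * p.coeff i := by
  induction p using Polynomial.induction_on' with
  | add p q hp hq => simp [add_comp, hp, hq, mul_add]
  | monomial n a =>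
    rw [← C_mul_X_pow_eq_monomial, mul_comp, C_comp, X_pow_comp, neg_pow, ← mul_assoc,
      ← C_1, ← C_neg, ← C_pow, ← C_mul, coeff_C_mul_X_pow, coeff_C_mul_X_pow]
    split_ifs with h <;> simp [h, mul_comm]

lemma coeff_prod_X_sub_C_eq_zero_of_odd [NoZeroDivisors R] [CharZero R] {ι : Type*} [Fintype ι]
    {t : ι → R} (σ : Equiv.Perm ι) (hσ : ∀ i, t (σ i) = -t i) {l : ℕ}
    (hl : Odd (l + Fintype.card ι)) : (∏ i, (X - C (t i))).coeff l = 0 := by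
  set g := ∏ i, (X - C (t i))
  have hcomp : g.comp (-X) = C ((-1) ^ Fintype.card ι) * g := by
    rw [prod_comp, ← Equiv.prod_comp σ, C_pow, ← card_univ, ← prod_const, ← prod_mul_distrib]
    refine prod_congr rfl fun i _ => ?_
    simp only [hσ, sub_comp, neg_comp, X_comp, C_comp, map_neg, map_one]
    ring
  have h := congrArg (coeff · l) hcomp
  simp only [coeff_comp_neg_X, coeff_C_mul] at h
  rcases Nat.even_or_odd l with hl' | hl'
  · have hn : Odd (Fintype.card ι) := (Nat.odd_add'.1 hl).2 hl'
    rw [hl'.neg_one_pow, hn.neg_one_pow, one_mul, neg_one_mul, eq_comm] at h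
    exact CharZero.neg_eq_self_iff.1 h
  · have hn : Even (Fintype.card ι) := (Nat.odd_add.1 hl).1 hl'
    rw [hl'.neg_one_pow, hn.neg_one_pow, one_mul, neg_one_mul] at h
    exact CharZero.neg_eq_self_iff.1 h

end CommRing

lemma card_roots_toFinset_sub_le_iterate_derivative (p : ℝ[X]) (m : ℕ) :
    p.roots.toFinset.card - m ≤ (derivative^[m] p).roots.toFinset.card := by
  induction m with
  | zero => simp
  | succ m ih =>
    rw [Function.iterate_succ_apply']
    have := card_roots_toFinset_le_derivative (derivative^[m] p)
    omega

lemma natDegree_lt_of_coeff_eq_zero_of_coeff_succ_eq_zero {p : ℝ[X]} {m : ℕ} (hp : p ≠ 0)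
    (hroots : p.roots.toFinset.card = p.natDegree) (hm : p.coeff m = 0)
    (hm' : p.coeff (m + 1) = 0) : p.natDegree < m := by
  by_contra! hle
  rcases hle.eq_or_lt with rfl | hlt
  · exact leadingCoeff_ne_zero.2 hp hm
  set q := derivative^[m] p
  have hq_roots : p.natDegree - m ≤ q.roots.toFinset.card :=
    hroots ▸ card_roots_toFinset_sub_le_iterate_derivative p m
  have hq : q ≠ 0 := by
    rintro hq
    rw [hq, roots_zero, Multiset.toFinset_zero, card_empty] at hq_roots
    omega
  have hnodup : q.roots.Nodup := by
    rw [← Multiset.toFinset_card_eq_card_iff_nodup]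
    have := (natDegree_iterate_derivative p m).trans hq_roots
    exact le_antisymm (Multiset.toFinset_card_le _) ((card_roots' q).trans this)
  have hX2 : X ^ 2 ∣ q := by
    rw [X_pow_dvd_iff]
    intro i hi
    interval_cases i <;> simp [q, coeff_iterate_derivative, hm, hm', add_comm]
  have := Multiset.nodup_iff_count_le_one.1 hnodup 0
  rw [count_roots, ← Nat.lt_succ_iff, ← not_le, le_rootMultiplicity_iff hq] at this
  exact this (by simpa using hX2)

theorem exists_sum_mul_pow_eq_of_sum_coeff_mul_eq_zero {K : Type*} [Field K] {n : ℕ}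
    {t : Fin n → K} (ht : Function.Injective t) (u : ℕ → K)
    (hu : ∑ i ∈ range (n + 1), (∏ j, (X - C (t j))).coeff i * u i = 0) :
    ∃ c : Fin n → K, ∀ i ≤ n, ∑ j, c j * t j ^ i = u i := by
  set V := Matrix.vandermonde t
  have hV : IsUnit V.det := (Matrix.det_vandermonde_ne_zero_iff.2 ht).isUnit
  set c := Matrix.vecMul (fun i : Fin n => u i) V⁻¹
  have hcV : Matrix.vecMul c V = fun i : Fin n => u i := by
    rw [Matrix.vecMul_vecMul, Matrix.nonsing_inv_mul _ hV, Matrix.vecMul_one]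
  have hlow : ∀ i < n, ∑ j, c j * t j ^ i = u i := fun i hi => by
    simpa [Matrix.vecMul, dotProduct, V] using congrFun hcV ⟨i, hi⟩
  suffices htop : ∑ j, c j * t j ^ n = u n from
    ⟨c, fun i hi => hi.lt_or_eq.elim (hlow i) fun hin => hin ▸ htop⟩
  set g := ∏ j, (X - C (t j))
  have hg : g.natDegree = n := by simp [g]
  have hcg : ∑ l ∈ range (n + 1), g.coeff l * ∑ j, c j * t j ^ l = 0 := by
    simp_rw [mul_sum]
    rw [sum_comm]
    refine sum_eq_zero fun j _ => ?_
    have hroot : g.eval (t j) = 0 := by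
      rw [eval_prod]
      exact prod_eq_zero (mem_univ j) (by simp)
    rw [eval_eq_sum_range' (n := n + 1) (by omega)] at hroot
    rw [← mul_zero (c j), ← hroot, mul_sum]
    exact sum_congr rfl fun l _ => by ring
  have hlead : g.coeff n = 1 := hg ▸ (monic_prod_of_monic _ _ fun j _ => monic_X_sub_C (t j))
  rw [sum_range_succ, hlead, one_mul] at hcg hu
  rw [sum_congr rfl fun l hl => by rw [hlow l (mem_range.1 hl)]] at hcg
  exact add_left_cancel (hcg.trans hu.symm)

end Polynomial

open scoped Polynomial

lemma sum_coeff_mul_moment_eq_zero {R : Type*} [CommRing R] {r D d s : ℕ}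
    (lam al be : Fin r → R) (p : R[X])
    (hp : ∀ j, MvPolynomial.eval ![al j, be j] (p.homogenize d) = 0) (hs : d + s ≤ D) :
    ∑ i ∈ range (d + 1), p.coeff i * ∑ j, lam j * al j ^ (i + s) * be j ^ (D - (i + s)) = 0 := by
  calc _ = ∑ j, lam j * al j ^ s * be j ^ (D - d - s) *
        MvPolynomial.eval ![al j, be j] (p.homogenize d) := by
        simp_rw [Polynomial.eval_homogenize_eq_sum, mul_sum]
        rw [sum_comm]
        refine sum_congr rfl fun j _ => sum_congr rfl fun i hi => ?_
        have : D - (i + s) = D - d - s + (d - i) := by have := mem_range.1 hi; omega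
        simp only [Matrix.cons_val_zero, Matrix.cons_val_one, this, pow_add]
        ring
    _ = 0 := by simp [hp]

lemma coeff_eq_zero_of_moments_eq_single {k r d i₀ : ℕ} {lam al be : Fin r → ℝ}
    (hM : ∀ i ≤ 2 * k, ∑ j, lam j * al j ^ i * be j ^ (2 * k - i) = if i = k then 1 else 0)
    {p : ℝ[X]} (hpd : p.natDegree ≤ d)
    (hp : ∀ j, MvPolynomial.eval ![al j, be j] (p.homogenize d) = 0)
    (hi₀ : i₀ ≤ k) (hd : d ≤ k + i₀) : p.coeff i₀ = 0 := by
  have h := sum_coeff_mul_moment_eq_zero lam al be p hp (s := k - i₀) (D := 2 * k) (by omega)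
  rw [sum_congr rfl fun i hi => by rw [hM (i + (k - i₀)) (by have := mem_range.1 hi; omega)]] at h
  by_cases hi₀d : i₀ ≤ d
  · rwa [sum_eq_single_of_mem i₀ (mem_range.2 (by omega)) fun i _ hi => by
      rw [if_neg (by omega), mul_zero], if_pos (by omega), mul_one] at h
  · exact Polynomial.coeff_eq_zero_of_natDegree_lt (by omega)

lemma exists_real_rooted_homogenize_eval_eq_zero {r : ℕ} (al be : Fin r → ℝ) :
    ∃ (p : ℝ[X]) (d : ℕ), p ≠ 0 ∧ p.roots.toFinset.card = p.natDegree ∧ p.natDegree ≤ d ∧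
      d ≤ p.natDegree + 1 ∧ d ≤ r ∧ ∀ j, MvPolynomial.eval ![al j, be j] (p.homogenize d) = 0 := by
  classical
  set F := univ.filter fun j => be j ≠ 0
  set T := F.image fun j => al j / be j
  set p := ∏ t ∈ T, (Polynomial.X - Polynomial.C t)
  have hdeg : p.natDegree = #T := Polynomial.natDegree_finsetProd_X_sub_C_eq_card T id
  have hT : #T ≤ #F := card_image_le
  have hfinite : ∀ d, #T ≤ d → ∀ j, be j ≠ 0 →
      MvPolynomial.eval ![al j, be j] (p.homogenize d) = 0 := by
    intro d hd j hj
    rw [Polynomial.eval_homogenize (hdeg ▸ hd) _ (by simpa using hj), Polynomial.eval_prod,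
      prod_eq_zero (mem_image_of_mem _ (mem_filter.2 ⟨mem_univ j, hj⟩)) (by simp), zero_mul]
  refine ⟨p, if ∀ j, be j ≠ 0 then #T else #T + 1,
    (Polynomial.monic_prod_of_monic _ _ fun t _ => Polynomial.monic_X_sub_C t).ne_zero,
    by simp [p, Polynomial.roots_prod_X_sub_C, hdeg], ?_⟩
  split_ifs with h
  · have hF : #F = r := by simp [F, filter_true_of_mem fun j _ => h j]
    exact ⟨hdeg.le, by omega, by omega, fun j => hfinite _ le_rfl j (h j)⟩
  · obtain ⟨j₀, hj₀⟩ := not_forall_not.1 h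
    have hF : #F < r := by
      simpa using card_lt_card (filter_ssubset.2 ⟨j₀, mem_univ _, not_not.2 hj₀⟩)
    refine ⟨by omega, by omega, by omega, fun j => ?_⟩
    by_cases hj : be j = 0
    · exact Polynomial.eval_homogenize_eq_zero_of_natDegree_lt (by omega) (by simpa using hj)
    · exact hfinite _ (by omega) j hj

theorem not_moments_eq_single_of_lt {k r : ℕ} (hr : r < 2 * k) (lam al be : Fin r → ℝ) :
    ¬ ∀ i ≤ 2 * k, ∑ j, lam j * al j ^ i * be j ^ (2 * k - i) = if i = k then 1 else 0 := by
  intro hM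
  obtain ⟨p, d, hp, hroots, hpd, hdp, hdr, hvanish⟩ :=
    exists_real_rooted_homogenize_eval_eq_zero al be
  have hcoeff : ∀ i₀ ≤ k, d ≤ k + i₀ → p.coeff i₀ = 0 := fun i₀ hi₀ hd =>
    coeff_eq_zero_of_moments_eq_single hM hpd hvanish hi₀ hd
  have := Polynomial.natDegree_lt_of_coeff_eq_zero_of_coeff_succ_eq_zero hp hroots
    (hcoeff (d - k) (by omega) (by omega)) (hcoeff (d - k + 1) (by omega) (by omega))
  omega

def symmetricNodes (n : ℕ) (j : Fin n) : ℝ := 2 * j + 1 - n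

lemma symmetricNodes_injective (n : ℕ) : Function.Injective (symmetricNodes n) :=
  fun i j h => Fin.ext (by unfold symmetricNodes at h; exact_mod_cast (by linarith : (i : ℝ) = j))

lemma symmetricNodes_rev {n : ℕ} (j : Fin n) : symmetricNodes n j.rev = -symmetricNodes n j := by
  rw [symmetricNodes, symmetricNodes, Fin.val_rev, Nat.cast_sub (by omega)]
  push_cast
  ring

lemma exists_sum_mul_symmetricNodes_pow_eq_single {n k : ℕ} (hkn : k ≤ n) (hodd : Odd (k + n)) :
    ∃ c : Fin n → ℝ, ∀ e ≤ n, ∑ j, c j * symmetricNodes n j ^ e = if e = k then 1 else 0 := by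
  refine Polynomial.exists_sum_mul_pow_eq_of_sum_coeff_mul_eq_zero (symmetricNodes_injective n) _ ?_
  rw [sum_eq_single_of_mem k (mem_range.2 (by omega)) fun i _ hi => by rw [if_neg hi, mul_zero],
    if_pos rfl, mul_one]
  exact Polynomial.coeff_prod_X_sub_C_eq_zero_of_odd Fin.revPerm symmetricNodes_rev
    (by simpa using hodd)

theorem exists_moments_eq_single {k : ℕ} (hk : 0 < k) :
    ∃ r ≤ 2 * k, ∃ lam al be : Fin r → ℝ,
      ∀ i ≤ 2 * k, ∑ j, lam j * al j ^ i * be j ^ (2 * k - i) = if i = k then 1 else 0 := by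
  rcases Nat.even_or_odd k with hk' | hk'
  · obtain ⟨c, hc⟩ := exists_sum_mul_symmetricNodes_pow_eq_single (n := 2 * k - 1) (k := k)
      (by omega) (by grind)
    -- the extra term `λ₀ y^(2k)` corrects the only moment the nodes miss, the one with `i = 0`
    refine ⟨2 * k - 1 + 1, by omega,
      Fin.cons (-∑ j, c j * symmetricNodes _ j ^ (2 * k)) c, Fin.cons 0 1,
      Fin.cons 1 (symmetricNodes _), fun i hi => ?_⟩
    rw [Fin.sum_univ_succ]
    rcases Nat.eq_zero_or_pos i with rfl | hi0
    · simp [hk.ne]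
    · simp [zero_pow hi0.ne', hc (2 * k - i) (by omega), show 2 * k - i = k ↔ i = k by omega]
  · obtain ⟨c, hc⟩ := exists_sum_mul_symmetricNodes_pow_eq_single (n := 2 * k) (k := k)
      (by omega) (by grind)
    refine ⟨2 * k, le_rfl, c, 1, symmetricNodes _, fun i hi => ?_⟩
    simp [hc (2 * k - i) (by omega), show 2 * k - i = k ↔ i = k by omega]

/-- For `k ≥ 3`, the form `p_{2k} = C(2k,k) x^k y^k` has real rank `2k`. -/
theorem realRank_p_even (k : ℕ) (hk : 3 ≤ k) :
    LrankR (2 * k)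
      (MvPolynomial.C (((2 * k).choose k : ℕ) : ℝ) * X 0 ^ k * X 1 ^ k)
      = ((2 * k : ℕ) : ℕ∞) := by
  apply le_antisymm
  · obtain ⟨r, hr, lam, al, be, hM⟩ := exists_moments_eq_single (k := k) (by omega)
    exact sInf_le_of_le ⟨r, rfl, lam, al, be, (C_choose_mul_X_pow_mul_X_pow_eq_iff lam al be).2 hM⟩
      (by exact_mod_cast hr)
  · refine le_sInf ?_
    rintro _ ⟨r, rfl, lam, al, be, h⟩
    exact_mod_cast not_lt.1 fun hr =>
      not_moments_eq_single_of_lt hr lam al be ((C_choose_mul_X_pow_mul_X_pow_eq_iff lam al be).1 h)
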